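/- Let R be a ring which has only finitely many simple right R-modules up to isomorphism. Then every distributive right R-module is quotient finite-dimensional, i.e., every quotient module of a distributive right R-module does not contain an infinite direct sum of nonzero submodules. -/

import Mathlib

/-- A module is *distributive* if its lattice of submodules is distributive, i.e.
`X ⊓ (Y ⊔ Z) = (X ⊓ Y) ⊔ (X ⊓ Z)` for all submodules `X, Y, Z`. -/
def IsDistribModule (R M : Type*) [Ring R] [AddCommGroup M] [Module R M] : Prop :=
  ∀ X Y Z : Submodule R M, X ⊓ (Y ⊔ Z) = X ⊓ Y ⊔ X ⊓ Z

/-- A module is *finite-dimensional* (in the sense of Goldie/uniform dimension) if it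
does not contain an infinite direct sum of nonzero submodules, i.e. every independent
family of nonzero submodules is finite. -/
def IsFinDimModule (R M : Type*) [Ring R] [AddCommGroup M] [Module R M] : Prop :=
  ∀ (ι : Type) (N : ι → Submodule R M), iSupIndep N → (∀ i, N i ≠ ⊥) → Finite ι

/-- A ring `R` has only finitely many simple right `R`-modules up to isomorphism:
since every simple right module is isomorphic to a quotient of `R` (as a right module,
i.e. as an `Rᵐᵒᵖ`-module), this says that there is a finite set of right ideals such that
every simple quotient of `R` is isomorphic to a quotient by one of them. -/
def HasFinitelyManySimpleRightModules (R : Type*) [Ring R] : Prop :=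
  ∃ s : Finset (Submodule Rᵐᵒᵖ R),
    ∀ I : Submodule Rᵐᵒᵖ R, IsSimpleModule Rᵐᵒᵖ (R ⧸ I) →
      ∃ J ∈ s, Nonempty ((R ⧸ I) ≃ₗ[Rᵐᵒᵖ] (R ⧸ J))


/-- A module is *quotient finite-dimensional* if every quotient module of it is
finite-dimensional. -/
def IsQFDModule (R M : Type*) [Ring R] [AddCommGroup M] [Module R M] : Prop :=
  ∀ N : Submodule R M, IsFinDimModule R (M ⧸ N)


/-!
If `A` and `B` are disjoint submodules of a distributive module and `f : A ≅ B`, the graph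
`{a + f a}` of `f` lies in `A ⊕ B` but meets both `A` and `B` trivially, so distributivity forces
it to vanish. Hence a distributive module has no two disjoint isomorphic nonzero submodules, and,
passing to a quotient, no two disjoint submodules with isomorphic nonzero quotients.
An infinite independent family of nonzero submodules contains cyclic submodules `xᵢR`, each
with a simple quotient `R ⧸ mᵢ`; with only finitely many simple modules, two of these are
isomorphic, which is impossible.
-/

open MulOpposite LinearMap Submodule

section Distributive

variable {S M : Type*} [Ring S] [AddCommGroup M] [Module S M]

theorem IsDistribModule.quotient (hM : IsDistribModule S M) (N : Submodule S M) :
    IsDistribModule S (M ⧸ N) := by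
  intro X Y Z
  apply (comapMkQRelIso N).injective
  simp only [InfHomClass.map_inf, SupHomClass.map_sup]
  ext1
  exact hM _ _ _

theorem Submodule.mem_of_add_mem_sup_of_disjoint {A B K L : Submodule S M} (hAB : Disjoint A B)
    (hK : K ≤ A) (hL : L ≤ B) {a b : M} (ha : a ∈ A) (hb : b ∈ B) (h : a + b ∈ K ⊔ L) :
    a ∈ K := by
  obtain ⟨k, hk, l, hl, hkl⟩ := mem_sup.mp h
  have hak : a - k = l - b := by rw [sub_eq_sub_iff_add_eq_add, ← hkl, add_comm]
  have : a - k = 0 :=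
    disjoint_def.mp hAB _ (sub_mem ha (hK hk)) (hak ▸ sub_mem (hL hl) hb)
  rwa [sub_eq_zero.mp this]

variable {P : Type*} [AddCommGroup P] [Module S P]

theorem Submodule.injective_mapQ_iff {N : Submodule S M} {I : Submodule S P} {f : P →ₗ[S] M}
    {h : I ≤ N.comap f} : Function.Injective (I.mapQ N f h) ↔ N.comap f ≤ I := by
  rw [← ker_eq_bot, ker_mapQ, eq_bot_iff, map_le_iff_le_comap, comap_bot, ker_mkQ]

theorem LinearMap.disjoint_range_add_left {f g : P →ₗ[S] M} (hg : Function.Injective g)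
    (hfg : Disjoint (range f) (range g)) : Disjoint (range (f + g)) (range f) := by
  rw [disjoint_def]
  rintro _ ⟨p, rfl⟩ ⟨q, hq⟩
  have hgp : g p = f (q - p) := by rw [map_sub, hq, LinearMap.add_apply, add_sub_cancel_left]
  have : g p = 0 := disjoint_def.mp hfg _ (hgp ▸ mem_range_self f _) (mem_range_self g p)
  rw [LinearMap.add_apply, (injective_iff_map_eq_zero g).mp hg p this, map_zero, map_zero,
    add_zero]

theorem IsDistribModule.subsingleton_of_injective_of_disjoint (hM : IsDistribModule S M)
    {f g : P →ₗ[S] M} (hf : Function.Injective f) (hg : Function.Injective g)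
    (hfg : Disjoint (range f) (range g)) : Subsingleton P := by
  have hGf := disjoint_range_add_left hg hfg
  have hGg : Disjoint (range (f + g)) (range g) :=
    add_comm f g ▸ disjoint_range_add_left hf hfg.symm
  have hG : range (f + g) = ⊥ := by
    have hle : range (f + g) ≤ range f ⊔ range g := by
      rintro _ ⟨p, rfl⟩
      exact add_mem_sup (mem_range_self f p) (mem_range_self g p)
    simpa [inf_eq_left.mpr hle, hGf.eq_bot, hGg.eq_bot] using
      hM (range (f + g)) (range f) (range g)
  refine subsingleton_of_forall_eq 0 fun p => (injective_iff_map_eq_zero f).mp hf p ?_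
  have hfp : f p = g (-p) := by
    rw [map_neg, eq_neg_iff_add_eq_zero, ← LinearMap.add_apply, ← mem_bot S, ← hG]
    exact mem_range_self _ p
  exact disjoint_def.mp hfg _ (mem_range_self f p) (hfp ▸ mem_range_self g _)

variable {P' : Type*} [AddCommGroup P'] [Module S P']

theorem IsDistribModule.subsingleton_quotient_of_linearEquiv (hM : IsDistribModule S M)
    {f : P →ₗ[S] M} {g : P' →ₗ[S] M} (hfg : Disjoint (range f) (range g))
    {I : Submodule S P} {J : Submodule S P'} (hI : ker f ≤ I) (hJ : ker g ≤ J)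
    (e : (P ⧸ I) ≃ₗ[S] (P' ⧸ J)) : Subsingleton (P ⧸ I) := by
  set C := I.map f ⊔ J.map g
  have memI : ∀ p p', f p + g p' ∈ C → p ∈ I := fun p p' h => by
    have := mem_of_add_mem_sup_of_disjoint hfg map_le_range map_le_range
      (mem_range_self f p) (mem_range_self g p') h
    rwa [← mem_comap, comap_map_eq, sup_eq_left.mpr hI] at this
  have memJ : ∀ p p', f p + g p' ∈ C → p' ∈ J := fun p p' h => by
    have := mem_of_add_mem_sup_of_disjoint hfg.symm map_le_range map_le_range
      (mem_range_self g p') (mem_range_self f p) (by rwa [add_comm, sup_comm])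
    rwa [← mem_comap, comap_map_eq, sup_eq_left.mpr hJ] at this
  refine (hM.quotient C).subsingleton_of_injective_of_disjoint
    (f := I.mapQ C f fun p hp => mem_sup_left (mem_map_of_mem hp))
    (g := J.mapQ C g (fun p hp => mem_sup_right (mem_map_of_mem hp)) ∘ₗ e.toLinearMap) ?_ ?_ ?_
  · exact injective_mapQ_iff.mpr fun p hp => memI p 0 (by simpa using hp)
  · rw [LinearMap.coe_comp, LinearEquiv.coe_coe]
    refine Function.Injective.comp ?_ e.injective
    exact injective_mapQ_iff.mpr fun p' hp' => memJ 0 p' (by simpa using hp')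
  · rw [range_comp_of_range_eq_top _ e.range, range_mapQ, range_mapQ, disjoint_def]
    rintro _ ⟨_, ⟨p, rfl⟩, rfl⟩ ⟨_, ⟨p', rfl⟩, hp'⟩
    have : f p + g (-p') ∈ C := by
      rw [map_neg, ← sub_eq_add_neg, ← Quotient.mk_eq_zero, Quotient.mk_sub, sub_eq_zero]
      exact hp'.symm
    exact (Quotient.mk_eq_zero C).mpr (mem_sup_left (mem_map_of_mem (memI p _ this)))

end Distributive

theorem HasFinitelyManySimpleRightModules.exists_ne_linearEquiv {R : Type*} [Ring R]
    (hfin : HasFinitelyManySimpleRightModules R) {ι : Type*} [Infinite ι]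
    (m : ι → Submodule Rᵐᵒᵖ R) (hm : ∀ i, IsCoatom (m i)) :
    ∃ i j, i ≠ j ∧ Nonempty ((R ⧸ m i) ≃ₗ[Rᵐᵒᵖ] (R ⧸ m j)) := by
  obtain ⟨s, hs⟩ := hfin
  choose J hJs e using fun i => hs (m i) (isSimpleModule_iff_isCoatom.mpr (hm i))
  obtain ⟨i, j, hij, hJ⟩ :=
    Finite.exists_ne_map_eq_of_infinite fun i => (⟨J i, hJs i⟩ : s)
  exact ⟨i, j, hij, ⟨(e i).some.trans
    ((quotEquivOfEq _ _ (congrArg Subtype.val hJ)).trans (e j).some.symm)⟩⟩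

theorem IsDistribModule.isFinDimModule {R M : Type*} [Ring R] [AddCommGroup M] [Module Rᵐᵒᵖ M]
    (hfin : HasFinitelyManySimpleRightModules R) (hM : IsDistribModule Rᵐᵒᵖ M) :
    IsFinDimModule Rᵐᵒᵖ M := by
  intro ι N hN hN0
  by_contra hι
  have : Infinite ι := not_finite_iff_infinite.mp hι
  have : Module.Finite Rᵐᵒᵖ R := Module.Finite.equiv (opLinearEquiv Rᵐᵒᵖ).symm
  choose x hxN hx0 using fun i => (N i).ne_bot_iff.mp (hN0 i)
  let φ (i : ι) : R →ₗ[Rᵐᵒᵖ] M :=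
    toSpanSingleton Rᵐᵒᵖ M (x i) ∘ₗ (opLinearEquiv Rᵐᵒᵖ).toLinearMap
  have hφN (i : ι) : range (φ i) ≤ N i := by
    rintro _ ⟨r, rfl⟩
    simpa [φ] using (N i).smul_mem (op r) (hxN i)
  have hker (i : ι) : ker (φ i) ≠ ⊤ := fun h =>
    hx0 i (by simpa [φ] using (h ▸ mem_top : (1 : R) ∈ ker (φ i)))
  choose m hm hle using fun i => (eq_top_or_exists_le_coatom (ker (φ i))).resolve_left (hker i)
  obtain ⟨i, j, hij, ⟨e⟩⟩ := hfin.exists_ne_linearEquiv m hm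
  have := (isSimpleModule_iff_isCoatom.mpr (hm i)).nontrivial
  exact not_subsingleton _ (hM.subsingleton_quotient_of_linearEquiv
    ((hN.pairwiseDisjoint hij).mono (hφN i) (hφN j)) (hle i) (hle j) e)

/-- If `R` has only finitely many simple right `R`-modules up to isomorphism, then every
distributive right `R`-module is quotient finite-dimensional. -/
theorem stmt4 (R : Type*) [Ring R] (hfin : HasFinitelyManySimpleRightModules R)
    (M : Type*) [AddCommGroup M] [Module Rᵐᵒᵖ M] (hM : IsDistribModule Rᵐᵒᵖ M) :
    IsQFDModule Rᵐᵒᵖ M :=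
  fun N => (hM.quotient N).isFinDimModule hfin
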